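/- arXiv:1701.04526 — 10 statements merged into one kernel-verified Lean document; each statement's English description precedes it below -/
import Mathlib

section
/- Let q be a power of an odd prime. For any multiplicative characters A, B₁, …, B_n, C of 𝔽_q^× and any λ₁, …, λ_n ∈ 𝔽_q^× (all nonzero), ℙ_D^{(n)}[A; B₁,…,B_n; C; λ₁,…,λ_n] = (A(−1)/(q−1)ⁿ) · Σ_{χ₁,…,χ_n} J(Aχ₁χ₂⋯χ_n, (Cχ₁χ₂⋯χ_n)⁻¹) · ∏_{i=1}^n J(B_iχ_i, χ̄_i)·χ_i(λ_i), where each χ_i ranges over all multiplicative characters of 𝔽_q^×. -/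
open Finset

/-- Jacobi sum `J(A,B) = Σ_x A(x) B(1-x)`. -/
noncomputable def jacobiSum' {F : Type} [Field F] [Fintype F] (A B : MulChar F ℂ) : ℂ :=
  ∑ x : F, A x * B (1 - x)

/-- One-variable finite-field period function `ℙ_D^{(1)}[A; B; C; λ]`. -/
noncomputable def P1 {F : Type} [Field F] [Fintype F] (A B C : MulChar F ℂ) (l : F) : ℂ :=
  ∑ y : F, A y * (C * A⁻¹) (1 - y) * B⁻¹ (1 - l * y)

/-- Two-variable finite-field Appell–Lauricella period function `ℙ_D^{(2)}`. -/
noncomputable def P2 {F : Type} [Field F] [Fintype F] (A B₁ B₂ C : MulChar F ℂ) (l₁ l₂ : F) : ℂ :=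
  ∑ y : F, A y * (C * A⁻¹) (1 - y) * B₁⁻¹ (1 - l₁ * y) * B₂⁻¹ (1 - l₂ * y)

/-- n-variable finite-field Appell–Lauricella period function `ℙ_D^{(n)}`. -/
noncomputable def PDn {F : Type} [Field F] [Fintype F] (n : ℕ) (A : MulChar F ℂ)
    (B : Fin n → MulChar F ℂ) (C : MulChar F ℂ) (l : Fin n → F) : ℂ :=
  ∑ y : F, A y * (C * A⁻¹) (1 - y) * ∏ i, (B i)⁻¹ (1 - l i * y)

/-- Normalized two-variable Appell–Lauricella function `𝔽_D^{(2)}`. -/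
noncomputable def F2 {F : Type} [Field F] [Fintype F] (A B₁ B₂ C : MulChar F ℂ) (l₁ l₂ : F) : ℂ :=
  P2 A B₁ B₂ C l₁ l₂ / jacobiSum' A (C * A⁻¹)

/-- Normalized n-variable Appell–Lauricella function `𝔽_D^{(n)}`. -/
noncomputable def FDn {F : Type} [Field F] [Fintype F] (n : ℕ) (A : MulChar F ℂ)
    (B : Fin n → MulChar F ℂ) (C : MulChar F ℂ) (l : Fin n → F) : ℂ :=
  PDn n A B C l / jacobiSum' A (C * A⁻¹)

/-- Finite-field Gauss hypergeometric function `₂𝔽₁[A,B;C;λ] = ℙ_D^{(1)}[B;A;C;λ]/J(B,C B̄)`. -/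
noncomputable def twoF1 {F : Type} [Field F] [Fintype F] (A B C : MulChar F ℂ) (l : F) : ℂ :=
  P1 B A C l / jacobiSum' B (C * B⁻¹)

open scoped Classical in
/-- `δ(x) = 1` if `x = 0`, else `0`. -/
noncomputable def deltaC {F : Type} [Field F] [Fintype F] (x : F) : ℂ :=
  if x = 0 then 1 else 0

noncomputable instance {F : Type} [Field F] [Fintype F] : Fintype (MulChar F ℂ) :=
  Fintype.ofFinite _

/-- Character binomial coefficient `(A choose χ) = -χ(-1) J(A, χ̄)`. -/
noncomputable def charBinom {F : Type} [Field F] [Fintype F] (A χ : MulChar F ℂ) : ℂ :=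
  -χ (-1) * jacobiSum' A χ⁻¹

/-!
Expanding `J(A ∏ χᵢ, (C ∏ χᵢ)⁻¹) = Σₓ A(x) C̄(1-x) ∏ᵢ χᵢ(x/(1-x))` factors the sum over the
tuples `(χᵢ)` into `Σₓ A(x) C̄(1-x) ∏ᵢ Σ_ψ ψ(λᵢ x/(1-x)) J(Bᵢψ, ψ̄)`. Since
`J(Bψ, ψ̄) = Σₜ B(t) ψ(t/(1-t))`, orthogonality of characters gives
`Σ_ψ ψ(u) J(Bψ, ψ̄) = (q-1) B((1+u)⁻¹)` for `u ≠ 0`, and the involution `x = y/(y-1)` of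
`𝔽_q ∖ {1}` turns what is left into `A(-1) ℙ_D^{(n)}`.
-/

namespace MulChar

theorem sum_apply_eq_ite {M R : Type*} [CommMonoid M] [Finite M] [DecidableEq M] [CommRing R]
    [IsDomain R] [HasEnoughRootsOfUnity R (Monoid.exponent Mˣ)] [Fintype (MulChar M R)] (a : M) :
    ∑ χ : MulChar M R, χ a = if a = 1 then (Nat.card Mˣ : R) else 0 := by
  split_ifs with ha
  · simp [ha, ← Nat.card_eq_fintype_card, card_eq_card_units_of_hasEnoughRootsOfUnity]
  · obtain ⟨χ, hχ⟩ := exists_apply_ne_one_of_hasEnoughRootsOfUnity M R ha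
    refine eq_zero_of_mul_eq_self_left hχ ?_
    simp_rw [mul_sum, ← mul_apply]
    exact Fintype.sum_bijective _ (Group.mulLeft_bijective χ) _ _ fun _ ↦ rfl

theorem prod_apply {M R ι : Type*} [CommMonoid M] [CommRing R] (s : Finset ι)
    (χ : ι → MulChar M R) {a : M} (ha : IsUnit a) :
    (∏ i ∈ s, χ i) a = ∏ i ∈ s, χ i a :=
  map_prod ({ toFun := fun ψ ↦ ψ a, map_one' := one_apply ha,
              map_mul' := fun ψ ψ' ↦ mul_apply ψ ψ' a } : MulChar M R →* R) χ s

end MulChar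

theorem summand_apply_div_sub_one {F : Type} [Field F] {ι : Type*} [Fintype ι]
    (A C : MulChar F ℂ) (B : ι → MulChar F ℂ) (l : ι → F) {y : F} (hy : y ≠ 1) :
    A (y / (y - 1)) * C⁻¹ (1 - y / (y - 1)) *
        ∏ i, B i (1 + l i * (y / (y - 1) / (1 - y / (y - 1))))⁻¹
      = A (-1) * (A y * (C * A⁻¹) (1 - y) * ∏ i, (B i)⁻¹ (1 - l i * y)) := by
  have hy1 : y - 1 ≠ 0 := sub_ne_zero.mpr hy
  have hy1' : 1 - y ≠ 0 := sub_ne_zero.mpr (Ne.symm hy)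
  have hsub : 1 - y / (y - 1) = (1 - y)⁻¹ := by
    field_simp
    ring
  have hratio : y / (y - 1) / (1 - y / (y - 1)) = -y := by
    rw [hsub]
    field_simp
    ring
  have hsplit : y / (y - 1) = -1 * y * (1 - y)⁻¹ := by
    rw [div_eq_mul_inv, ← neg_sub, inv_neg]
    ring
  have hB : ∀ i, B i (1 + l i * -y)⁻¹ = (B i)⁻¹ (1 - l i * y) := fun i ↦ by
    rw [MulChar.inv_apply', mul_neg, ← sub_eq_add_neg]
  rw [hratio, prod_congr rfl fun i _ ↦ hB i, hsub, hsplit, map_mul, map_mul,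
    MulChar.inv_apply' C, inv_inv, MulChar.mul_apply, MulChar.inv_apply' A]
  ring

section FiniteField

variable {F : Type} [Field F] [Fintype F]

instance : NeZero (Monoid.exponent Fˣ : ℂ) :=
  ⟨Nat.cast_ne_zero.mpr Monoid.exponent_ne_zero_of_finite⟩

theorem sum_mulChar_apply_eq_ite [DecidableEq F] (a : F) :
    ∑ χ : MulChar F ℂ, χ a = if a = 1 then (Fintype.card F : ℂ) - 1 else 0 := by
  rw [MulChar.sum_apply_eq_ite, Nat.card_eq_fintype_card.symm.trans
    (Nat.card_eq_card_units_add_one F)]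
  push_cast
  ring_nf

theorem jacobiSum'_mul_prod_mul_prod_inv {ι : Type*} [Fintype ι] (A C : MulChar F ℂ)
    (χ : ι → MulChar F ℂ) :
    jacobiSum' (A * ∏ i, χ i) (C * ∏ i, χ i)⁻¹
      = ∑ x : F, A x * C⁻¹ (1 - x) * ∏ i, χ i (x / (1 - x)) := by
  refine sum_congr rfl fun x _ ↦ ?_
  rcases eq_or_ne x 0 with rfl | hx0
  · simp [MulChar.map_zero]
  rcases eq_or_ne x 1 with rfl | hx1
  · simp [MulChar.map_zero]
  have hw : IsUnit (x / (1 - x)) := (div_ne_zero hx0 (sub_ne_zero.mpr (Ne.symm hx1))).isUnit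
  rw [← MulChar.prod_apply _ _ hw, div_eq_mul_inv, map_mul, mul_inv, MulChar.mul_apply,
    MulChar.mul_apply, MulChar.inv_apply' (∏ i, χ i), MulChar.inv_apply' C]
  ring

theorem sum_mulChar_mul_jacobiSum' (B : MulChar F ℂ) {u : F} (hu : u ≠ 0) :
    ∑ ψ : MulChar F ℂ, ψ u * jacobiSum' (B * ψ) ψ⁻¹
      = ((Fintype.card F : ℂ) - 1) * B (1 + u)⁻¹ := by
  classical
  have hexpand : ∀ ψ : MulChar F ℂ,
      ψ u * jacobiSum' (B * ψ) ψ⁻¹ = ∑ t : F, B t * ψ (u * (t / (1 - t))) := fun ψ ↦ by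
    rw [jacobiSum', mul_sum]
    refine sum_congr rfl fun t _ ↦ ?_
    rw [MulChar.mul_apply, MulChar.inv_apply', div_eq_mul_inv, map_mul, map_mul]
    ring
  simp_rw [hexpand]
  rw [sum_comm]
  simp_rw [← mul_sum, sum_mulChar_apply_eq_ite]
  have hsol : ∀ t : F, u * (t / (1 - t)) = 1 → t = (1 + u)⁻¹ := fun t ht ↦ by
    have h1t : 1 - t ≠ 0 := fun h ↦ by simp [h] at ht
    rw [mul_div_assoc', div_eq_one_iff_eq h1t] at ht
    exact eq_inv_of_mul_eq_one_left (by linear_combination ht)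
  rw [sum_eq_single (1 + u)⁻¹ (fun t _ ht ↦ by rw [if_neg (mt (hsol t) ht), mul_zero])
    (by simp)]
  by_cases hB : B (1 + u)⁻¹ = 0
  · simp [hB]
  -- `B 0 = 0` covers `u = -1`, where Lean's `(1 + u)⁻¹` is `0`.
  have h1u : 1 + u ≠ 0 := fun h ↦ hB (by simp [h, MulChar.map_zero])
  rw [if_pos (by field_simp; rw [add_sub_cancel_left, div_self hu]), mul_comm]

theorem sum_jacobiSum'_mul_prod_jacobiSum' {ι : Type*} [Fintype ι] [DecidableEq ι]
    (A C : MulChar F ℂ) (B : ι → MulChar F ℂ) (l : ι → F) (hl : ∀ i, l i ≠ 0) :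
    ∑ χ : ι → MulChar F ℂ, jacobiSum' (A * ∏ i, χ i) (C * ∏ i, χ i)⁻¹ *
        ∏ i, jacobiSum' (B i * χ i) (χ i)⁻¹ * χ i (l i)
      = ((Fintype.card F : ℂ) - 1) ^ Fintype.card ι *
          ∑ x : F, A x * C⁻¹ (1 - x) * ∏ i, B i (1 + l i * (x / (1 - x)))⁻¹ := by
  simp_rw [jacobiSum'_mul_prod_mul_prod_inv, sum_mul]
  rw [sum_comm, mul_sum]
  refine sum_congr rfl fun x _ ↦ ?_
  have hfactor : ∑ χ : ι → MulChar F ℂ, A x * C⁻¹ (1 - x) * (∏ i, χ i (x / (1 - x))) *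
        ∏ i, jacobiSum' (B i * χ i) (χ i)⁻¹ * χ i (l i)
      = A x * C⁻¹ (1 - x) *
          ∏ i, ∑ ψ : MulChar F ℂ, ψ (l i * (x / (1 - x))) * jacobiSum' (B i * ψ) ψ⁻¹ := by
    rw [Fintype.prod_sum, mul_sum]
    refine sum_congr rfl fun χ _ ↦ ?_
    rw [mul_assoc, ← prod_mul_distrib]
    congr 1
    refine prod_congr rfl fun i _ ↦ ?_
    rw [map_mul]
    ring
  rw [hfactor]
  rcases eq_or_ne x 0 with rfl | hx0
  · simp [MulChar.map_zero]
  rcases eq_or_ne x 1 with rfl | hx1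
  · simp [MulChar.map_zero]
  have hw : x / (1 - x) ≠ 0 := div_ne_zero hx0 (sub_ne_zero.mpr (Ne.symm hx1))
  rw [prod_congr rfl fun i _ ↦ sum_mulChar_mul_jacobiSum' (B i) (mul_ne_zero (hl i) hw),
    prod_mul_distrib, prod_const, card_univ]
  ring

theorem sum_eq_sum_of_apply_div_sub_one {M : Type*} [AddCommMonoid M] {f g : F → M}
    (hf : f 1 = 0) (hg : g 1 = 0) (h : ∀ y ≠ 1, f (y / (y - 1)) = g y) :
    ∑ x, f x = ∑ y, g y := by
  classical
  rw [← sum_erase univ hf, ← sum_erase univ hg]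
  have hmaps : ∀ x ∈ univ.erase (1 : F), x / (x - 1) ∈ univ.erase 1 := fun x hx ↦ by
    have hx1 : x - 1 ≠ 0 := sub_ne_zero.mpr (ne_of_mem_erase hx)
    refine mem_erase.mpr ⟨fun h ↦ ?_, mem_univ _⟩
    rw [div_eq_one_iff_eq hx1] at h
    exact one_ne_zero (by linear_combination h : (1 : F) = 0)
  have hinvol : ∀ x ∈ univ.erase (1 : F), x / (x - 1) / (x / (x - 1) - 1) = x := fun x hx ↦ by
    have hx1 : x - 1 ≠ 0 := sub_ne_zero.mpr (ne_of_mem_erase hx)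
    field_simp
    ring
  exact (sum_nbij' _ _ hmaps hmaps hinvol hinvol fun y hy ↦ (h y (ne_of_mem_erase hy)).symm).symm

theorem sum_eq_mulChar_neg_one_mul_PDn (n : ℕ) (A C : MulChar F ℂ) (B : Fin n → MulChar F ℂ)
    (l : Fin n → F) :
    ∑ x : F, A x * C⁻¹ (1 - x) * ∏ i, B i (1 + l i * (x / (1 - x)))⁻¹
      = A (-1) * PDn n A B C l := by
  rw [PDn, mul_sum]
  exact sum_eq_sum_of_apply_div_sub_one (by simp [MulChar.map_zero]) (by simp [MulChar.map_zero])
    fun y hy ↦ summand_apply_div_sub_one A C B l hy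

end FiniteField

theorem statement_3_general (F : Type) [Field F] [Fintype F]
    (n : ℕ) (A C : MulChar F ℂ) (B : Fin n → MulChar F ℂ)
    (l : Fin n → F) (hl : ∀ i, l i ≠ 0) :
    PDn n A B C l =
      A (-1) / ((Fintype.card F : ℂ) - 1) ^ n *
        ∑ χ : Fin n → MulChar F ℂ,
          jacobiSum' (A * ∏ i, χ i) (C * ∏ i, χ i)⁻¹ *
            ∏ i, jacobiSum' (B i * χ i) (χ i)⁻¹ * (χ i) (l i) := by
  have hq : (Fintype.card F : ℂ) - 1 ≠ 0 :=
    sub_ne_zero.mpr (by exact_mod_cast Fintype.one_lt_card.ne')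
  have hA : A (-1) * A (-1) = 1 := by
    rw [← map_mul, neg_one_mul, neg_neg, MulChar.map_one]
  rw [sum_jacobiSum'_mul_prod_jacobiSum' A C B l hl, Fintype.card_fin,
    sum_eq_mulChar_neg_one_mul_PDn]
  field_simp
  linear_combination -PDn n A B C l * hA

/-- Jacobi-sum representation of the `ℙ_D^{(n)}` period function. -/
theorem statement_3 (F : Type) [Field F] [Fintype F] (hq : Odd (Fintype.card F))
    (n : ℕ) (A C : MulChar F ℂ) (B : Fin n → MulChar F ℂ)
    (l : Fin n → F) (hl : ∀ i, l i ≠ 0) :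
    PDn n A B C l =
      A (-1) / ((Fintype.card F : ℂ) - 1) ^ n *
        ∑ χ : Fin n → MulChar F ℂ,
          jacobiSum' (A * ∏ i, χ i) (C * ∏ i, χ i)⁻¹ *
            ∏ i, jacobiSum' (B i * χ i) (χ i)⁻¹ * (χ i) (l i) :=
  statement_3_general F n A C B l hl
end

section
/- Let q be a power of an odd prime. For any multiplicative characters A, B₁, B₂, C of 𝔽_q^× and any λ₁, λ₂ ∈ 𝔽_q, ℙ_D^{(2)}[A; B₁, B₂; C; λ₁, λ₂] = (−(AC)(−1)/(q−1)²) · Σ_{χ,ψ} (B₁χ choose χ)(B₂ψ choose ψ)(Aχψ choose Cχψ)·χ(λ₁)ψ(λ₂) + δ(λ₂)·((AC)(−1)/(q−1)) · Σ_χ (B₁χ choose χ)(Aχ choose Cχ)·χ(λ₁) + δ(λ₁)·((AC)(−1)/(q−1)) · Σ_ψ (B₂ψ choose ψ)(Aψ choose Cψ)·ψ(λ₂) + δ(λ₁)δ(λ₂)·J(A, CĀ), where χ, ψ range over all multiplicative characters of 𝔽_q^×. -/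
open Finset

/-! For `y ≠ 0` each factor `B̄(1 - λy)` is expanded in characters of `y`: by orthogonality,
`Σ_χ (Bχ choose χ) χ(u) = -(q - 1) B̄(1 - u)` for `u ≠ 0`, once the reflection
`J(D, E) = D(-1) J(D, \overline{DE})` has turned `(Bχ choose χ)` into
`-B(-1) Σ_x B(x) B̄(1 - x) χ(x)`. Multiplying the two expansions out and summing over `y` term by
term leaves moments `Σ_y A(y) (CĀ)(1 - y) D(y) = J(AD, CĀ)`, which the same reflection turns into
`-(AC)(-1) (AD choose CD)`. -/

lemma MulChar.apply_neg_one_mul_self {R R' : Type*} [CommRing R] [CommMonoidWithZero R']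
    (χ : MulChar R R') : χ (-1) * χ (-1) = 1 := by
  rw [← map_mul, neg_mul_neg, one_mul, map_one]

variable {F : Type} [Field F] [Fintype F]

lemma card_sub_one_ne_zero : (Fintype.card F : ℂ) - 1 ≠ 0 :=
  sub_ne_zero.mpr <| by exact_mod_cast (Fintype.one_lt_card (α := F)).ne'

open scoped Classical in
lemma sum_mulChar_apply (a : F) :
    ∑ χ : MulChar F ℂ, χ a = if a = 1 then (Fintype.card F : ℂ) - 1 else 0 := by
  split_ifs with ha
  · have hcard : Nat.card (MulChar F ℂ) = Fintype.card F - 1 := by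
      rw [MulChar.card_eq_card_units_of_hasEnoughRootsOfUnity, Nat.card_eq_fintype_card,
        Fintype.card_units]
    rw [ha]
    simp only [map_one, Finset.sum_const, Finset.card_univ, nsmul_eq_mul, mul_one,
      ← Nat.card_eq_fintype_card (α := MulChar F ℂ), hcard]
    rw [Nat.cast_sub Fintype.card_pos, Nat.cast_one]
  · obtain ⟨χ, hχ⟩ := MulChar.exists_apply_ne_one_of_hasEnoughRootsOfUnity F ℂ ha
    refine eq_zero_of_mul_eq_self_left hχ ?_
    simp only [Finset.mul_sum, ← MulChar.mul_apply]
    exact Fintype.sum_bijective _ (Group.mulLeft_bijective χ) _ _ fun _ ↦ rfl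

-- Substitute `x = 1 - w⁻¹`; then `1 - x = w⁻¹` and `x = -(1 - w) * w⁻¹` for `w ≠ 0`.
lemma jacobiSum'_eq_apply_neg_one_mul (D E : MulChar F ℂ) :
    jacobiSum' D E = D (-1) * jacobiSum' D (D * E)⁻¹ := by
  have hsubst : jacobiSum' D E = ∑ w : F, D (1 - w⁻¹) * E w⁻¹ := by
    rw [jacobiSum', ← Equiv.sum_comp (Equiv.subLeft (1 : F)), ← Equiv.sum_comp (Equiv.inv F)]
    simp only [Equiv.subLeft_apply, Equiv.inv_apply, sub_sub_cancel]
  rw [hsubst, show jacobiSum' D (D * E)⁻¹ = jacobiSum' (D * E)⁻¹ D from jacobiSum_comm _ _,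
    jacobiSum', Finset.mul_sum]
  refine Finset.sum_congr rfl fun w _ => ?_
  rcases eq_or_ne w 0 with rfl | hw
  · simp [MulChar.map_zero]
  · rw [MulChar.inv_apply', MulChar.mul_apply,
      show 1 - w⁻¹ = -1 * (1 - w) * w⁻¹ by field_simp; ring, map_mul, map_mul]
    ring

lemma sum_mul_apply_eq_charBinom (A C D : MulChar F ℂ) :
    ∑ y : F, A y * (C * A⁻¹) (1 - y) * D y = -(A * C) (-1) * charBinom (A * D) (C * D) := by
  have hprod : A * D * (C * A⁻¹) = C * D := by
    rw [mul_comm C, mul_mul_mul_comm, mul_inv_cancel, one_mul, mul_comm]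
  have hsum : ∑ y : F, A y * (C * A⁻¹) (1 - y) * D y = jacobiSum' (A * D) (C * A⁻¹) :=
    Finset.sum_congr rfl fun y _ => by rw [MulChar.mul_apply A D]; ring
  rw [hsum, jacobiSum'_eq_apply_neg_one_mul, hprod, charBinom]
  simp only [MulChar.mul_apply]
  linear_combination -(A (-1) * D (-1) * jacobiSum' (A * D) (C * D)⁻¹) * C.apply_neg_one_mul_self

lemma charBinom_mul_eq_sum (B χ : MulChar F ℂ) :
    charBinom (B * χ) χ = -B (-1) * ∑ x : F, B x * B⁻¹ (1 - x) * χ x := by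
  have hprod : (B * χ * χ⁻¹)⁻¹ = B⁻¹ := by rw [mul_inv_cancel_right]
  rw [charBinom, jacobiSum'_eq_apply_neg_one_mul, hprod, jacobiSum', Finset.mul_sum,
    Finset.mul_sum, Finset.mul_sum]
  refine Finset.sum_congr rfl fun x _ => ?_
  simp only [MulChar.mul_apply]
  linear_combination -(B (-1) * B x * χ x * B⁻¹ (1 - x)) * χ.apply_neg_one_mul_self

open scoped Classical in
lemma sum_charBinom_mul_apply {u : F} (hu : u ≠ 0) (B : MulChar F ℂ) :
    ∑ χ : MulChar F ℂ, charBinom (B * χ) χ * χ u = -((Fintype.card F : ℂ) - 1) * B⁻¹ (1 - u) := by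
  calc ∑ χ : MulChar F ℂ, charBinom (B * χ) χ * χ u
      = -B (-1) * ∑ x : F, B x * B⁻¹ (1 - x) * ∑ χ : MulChar F ℂ, χ (x * u) := by
        simp only [charBinom_mul_eq_sum, Finset.mul_sum, Finset.sum_mul, map_mul]
        rw [Finset.sum_comm]
        exact Finset.sum_congr rfl fun _ _ => Finset.sum_congr rfl fun _ _ => by ring
    _ = -B (-1) * (B u⁻¹ * B⁻¹ (1 - u⁻¹) * ((Fintype.card F : ℂ) - 1)) := by
        simp only [sum_mulChar_apply, mul_eq_one_iff_eq_inv₀ hu, mul_ite, mul_zero,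
          Finset.sum_ite_eq', Finset.mem_univ, if_true]
    _ = -((Fintype.card F : ℂ) - 1) * B⁻¹ (1 - u) := by
        have hneg : B (-1) * B u⁻¹ * B⁻¹ (1 - u⁻¹) = B⁻¹ (1 - u) := by
          rw [MulChar.inv_apply', MulChar.inv_apply', ← map_mul, ← map_mul]
          congr 1
          rw [show (1 : F) - u⁻¹ = -(1 - u) * u⁻¹ by field_simp; ring, mul_inv, inv_inv, inv_neg]
          field_simp
        linear_combination -((Fintype.card F : ℂ) - 1) * hneg

lemma inv_apply_one_sub_mul_eq (B : MulChar F ℂ) (l : F) {y : F} (hy : y ≠ 0) :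
    B⁻¹ (1 - l * y) = deltaC l -
      ((Fintype.card F : ℂ) - 1)⁻¹ * ∑ χ : MulChar F ℂ, charBinom (B * χ) χ * χ l * χ y := by
  rcases eq_or_ne l 0 with rfl | hl
  · simp [deltaC, MulChar.map_zero]
  have hsum := sum_charBinom_mul_apply (mul_ne_zero hl hy) B
  simp only [map_mul, ← mul_assoc] at hsum
  rw [hsum, deltaC, if_neg hl]
  field_simp [card_sub_one_ne_zero (F := F)]
  ring

lemma sum_mul_sum_mulChar {ι : Type*} [Fintype ι] (A C : MulChar F ℂ) (c : ι → ℂ)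
    (χ : ι → MulChar F ℂ) :
    ∑ y : F, A y * (C * A⁻¹) (1 - y) * ∑ i, c i * χ i y
      = -(A * C) (-1) * ∑ i, c i * charBinom (A * χ i) (C * χ i) := by
  calc ∑ y : F, A y * (C * A⁻¹) (1 - y) * ∑ i, c i * χ i y
      = ∑ i, c i * ∑ y : F, A y * (C * A⁻¹) (1 - y) * χ i y := by
        simp only [Finset.mul_sum]
        rw [Finset.sum_comm]
        exact Finset.sum_congr rfl fun i _ => Finset.sum_congr rfl fun y _ => by ring
    _ = -(A * C) (-1) * ∑ i, c i * charBinom (A * χ i) (C * χ i) := by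
        simp only [sum_mul_apply_eq_charBinom, Finset.mul_sum]
        exact Finset.sum_congr rfl fun i _ => by ring

lemma sum_mul_sum_charBinom (A C B : MulChar F ℂ) (l : F) :
    ∑ y : F, A y * (C * A⁻¹) (1 - y) * ∑ χ : MulChar F ℂ, charBinom (B * χ) χ * χ l * χ y
      = -(A * C) (-1) *
          ∑ χ : MulChar F ℂ, charBinom (B * χ) χ * charBinom (A * χ) (C * χ) * χ l := by
  refine (sum_mul_sum_mulChar A C (fun χ => charBinom (B * χ) χ * χ l) id).trans ?_
  exact congrArg _ <| Finset.sum_congr rfl fun χ _ => by simp only [id]; ring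

lemma sum_mul_sum_mul_sum_charBinom (A C B₁ B₂ : MulChar F ℂ) (l₁ l₂ : F) :
    ∑ y : F, A y * (C * A⁻¹) (1 - y) *
        (∑ χ : MulChar F ℂ, charBinom (B₁ * χ) χ * χ l₁ * χ y) *
        (∑ ψ : MulChar F ℂ, charBinom (B₂ * ψ) ψ * ψ l₂ * ψ y)
      = -(A * C) (-1) *
          ∑ χ : MulChar F ℂ, ∑ ψ : MulChar F ℂ,
            charBinom (B₁ * χ) χ * charBinom (B₂ * ψ) ψ *
              charBinom (A * χ * ψ) (C * χ * ψ) * χ l₁ * ψ l₂ := by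
  set c : MulChar F ℂ × MulChar F ℂ → ℂ :=
    fun p => charBinom (B₁ * p.1) p.1 * p.1 l₁ * (charBinom (B₂ * p.2) p.2 * p.2 l₂)
  have hprod : ∀ y : F, (∑ χ : MulChar F ℂ, charBinom (B₁ * χ) χ * χ l₁ * χ y) *
      (∑ ψ : MulChar F ℂ, charBinom (B₂ * ψ) ψ * ψ l₂ * ψ y) = ∑ p, c p * (p.1 * p.2) y := by
    intro y
    rw [Finset.sum_mul_sum, Fintype.sum_prod_type]
    exact Finset.sum_congr rfl fun χ _ => Finset.sum_congr rfl fun ψ _ => by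
      rw [MulChar.mul_apply]; ring
  simp only [mul_assoc (A _ * _), hprod]
  rw [sum_mul_sum_mulChar, Fintype.sum_prod_type]
  exact congrArg _ <| Finset.sum_congr rfl fun χ _ => Finset.sum_congr rfl fun ψ _ => by
    simp only [c, mul_assoc A, mul_assoc C]; ring

theorem statement_4_general (F : Type) [Field F] [Fintype F]
    (A B₁ B₂ C : MulChar F ℂ) (l₁ l₂ : F) :
    P2 A B₁ B₂ C l₁ l₂ =
      -((A * C) (-1)) / ((Fintype.card F : ℂ) - 1) ^ 2 *
          ∑ χ : MulChar F ℂ, ∑ ψ : MulChar F ℂ,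
            charBinom (B₁ * χ) χ * charBinom (B₂ * ψ) ψ *
              charBinom (A * χ * ψ) (C * χ * ψ) * χ l₁ * ψ l₂ +
        deltaC l₂ * ((A * C) (-1) / ((Fintype.card F : ℂ) - 1)) *
          ∑ χ : MulChar F ℂ, charBinom (B₁ * χ) χ * charBinom (A * χ) (C * χ) * χ l₁ +
        deltaC l₁ * ((A * C) (-1) / ((Fintype.card F : ℂ) - 1)) *
          ∑ ψ : MulChar F ℂ, charBinom (B₂ * ψ) ψ * charBinom (A * ψ) (C * ψ) * ψ l₂ +
        deltaC l₁ * deltaC l₂ * jacobiSum' A (C * A⁻¹) := by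
  set t : ℂ := ((Fintype.card F : ℂ) - 1)⁻¹
  set w : F → ℂ := fun y => A y * (C * A⁻¹) (1 - y)
  set S : MulChar F ℂ → F → F → ℂ :=
    fun B l y => ∑ χ : MulChar F ℂ, charBinom (B * χ) χ * χ l * χ y
  have hexpand : P2 A B₁ B₂ C l₁ l₂ = ∑ y : F,
      (deltaC l₁ * deltaC l₂ * w y - deltaC l₂ * t * (w y * S B₁ l₁ y)
        - deltaC l₁ * t * (w y * S B₂ l₂ y) + t ^ 2 * (w y * S B₁ l₁ y * S B₂ l₂ y)) := by
    refine Finset.sum_congr rfl fun y _ => ?_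
    rcases eq_or_ne y 0 with rfl | hy
    · simp [w, MulChar.map_zero]
    · rw [inv_apply_one_sub_mul_eq B₁ l₁ hy, inv_apply_one_sub_mul_eq B₂ l₂ hy]
      ring
  rw [hexpand, Finset.sum_add_distrib, Finset.sum_sub_distrib, Finset.sum_sub_distrib,
    ← Finset.mul_sum, ← Finset.mul_sum, ← Finset.mul_sum, ← Finset.mul_sum,
    sum_mul_sum_charBinom, sum_mul_sum_charBinom, sum_mul_sum_mul_sum_charBinom]
  have hJ : ∑ y : F, w y = jacobiSum' A (C * A⁻¹) := rfl
  rw [hJ, div_eq_mul_inv, div_eq_mul_inv, ← inv_pow]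
  ring

/-- binomial-coefficient representation of `ℙ_D^{(2)}`. -/
theorem statement_4 (F : Type) [Field F] [Fintype F] (hq : Odd (Fintype.card F))
    (A B₁ B₂ C : MulChar F ℂ) (l₁ l₂ : F) :
    P2 A B₁ B₂ C l₁ l₂ =
      -((A * C) (-1)) / ((Fintype.card F : ℂ) - 1) ^ 2 *
          ∑ χ : MulChar F ℂ, ∑ ψ : MulChar F ℂ,
            charBinom (B₁ * χ) χ * charBinom (B₂ * ψ) ψ *
              charBinom (A * χ * ψ) (C * χ * ψ) * χ l₁ * ψ l₂ +
        deltaC l₂ * ((A * C) (-1) / ((Fintype.card F : ℂ) - 1)) *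
          ∑ χ : MulChar F ℂ, charBinom (B₁ * χ) χ * charBinom (A * χ) (C * χ) * χ l₁ +
        deltaC l₁ * ((A * C) (-1) / ((Fintype.card F : ℂ) - 1)) *
          ∑ ψ : MulChar F ℂ, charBinom (B₂ * ψ) ψ * charBinom (A * ψ) (C * ψ) * ψ l₂ +
        deltaC l₁ * deltaC l₂ * jacobiSum' A (C * A⁻¹) :=
  statement_4_general F A B₁ B₂ C l₁ l₂
end

section
/- Let q be a power of an odd prime. For any multiplicative characters A, B₁, …, B_n, C of 𝔽_q^× and any λ₁, …, λ_n ∈ 𝔽_q, ℙ_D^{(n)}[A; B₁,…,B_n; C; λ₁,…,λ_n] = A(−1) · ℙ_D^{(n)}[A; B₁,…,B_n; A·C̄·B₁B₂⋯B_n; 1−λ₁, …, 1−λ_n]. -/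
open Finset

/-! The substitution `y ↦ y / (y - 1)` is an involution of `𝔽_q ∖ {1}`, and both sums have no
contribution from `y = 1`. Writing `u = 1 - y`, it sends `y ↦ -y u⁻¹`, `1 - y ↦ u⁻¹` and
`1 - λᵢ y ↦ (1 - (1 - λᵢ) y) u⁻¹`, so each summand of `ℙ_D^{(n)}[A; B; C; λ]` becomes `A(-1)` times
the summand of `ℙ_D^{(n)}[A; B; A C̄ ∏ Bᵢ; 1 - λ]`: the powers of `u` collect into the character
`Ā (C Ā)⁻¹ ∏ Bᵢ = (A C̄ ∏ Bᵢ) Ā`. -/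

theorem MulChar.prod_apply_of_isUnit {R R' ι : Type*} [CommMonoid R] [CommMonoidWithZero R']
    (s : Finset ι) (χ : ι → MulChar R R') {a : R} (ha : IsUnit a) :
    (∏ i ∈ s, χ i) a = ∏ i ∈ s, χ i a :=
  map_prod (⟨⟨fun ψ => ψ a, MulChar.one_apply ha⟩, fun ψ ψ' => MulChar.mul_apply ψ ψ' a⟩ :
    MulChar R R' →* R') χ s

theorem div_sub_one_ne_one {K : Type*} [Field K] (y : K) : y / (y - 1) ≠ 1 := by
  by_cases hy : y - 1 = 0
  · simp [hy]
  · rw [Ne, div_eq_one_iff_eq hy]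
    intro h
    simpa using congrArg (y - ·) h

theorem div_sub_one_div_div_sub_one_sub_one {K : Type*} [Field K] {y : K} (hy : y ≠ 1) :
    y / (y - 1) / (y / (y - 1) - 1) = y := by
  have hy' : y - 1 ≠ 0 := sub_ne_zero.mpr hy
  field_simp
  ring

section PeriodFunction

variable {F : Type} [Field F] {n : ℕ} (A : MulChar F ℂ) (B : Fin n → MulChar F ℂ)
  (C : MulChar F ℂ) (l : Fin n → F)

noncomputable def pdnSummand (y : F) : ℂ :=
  A y * (C * A⁻¹) (1 - y) * ∏ i, (B i)⁻¹ (1 - l i * y)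

theorem PDn_eq_sum_pdnSummand [Fintype F] : PDn n A B C l = ∑ y, pdnSummand A B C l y :=
  rfl

theorem pdnSummand_one : pdnSummand A B C l 1 = 0 := by
  simp [pdnSummand, MulChar.map_zero]

theorem pdnSummand_div_sub_one {y : F} (hy : y ≠ 1) :
    pdnSummand A B C l (y / (y - 1)) =
      A (-1) * pdnSummand A B (A * C⁻¹ * ∏ i, B i) (fun i => 1 - l i) y := by
  set u : F := 1 - y
  have hu : u ≠ 0 := sub_ne_zero.mpr hy.symm
  have hy' : y - 1 ≠ 0 := sub_ne_zero.mpr hy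
  have hz : y / (y - 1) = -1 * y * u⁻¹ := by field_simp; ring
  have h1z : 1 - y / (y - 1) = u⁻¹ := by field_simp; ring
  have hlz (i : Fin n) : 1 - l i * (y / (y - 1)) = (1 - (1 - l i) * y) * u⁻¹ := by
    field_simp; ring
  have hB (i : Fin n) : (B i)⁻¹ ((1 - (1 - l i) * y) * u⁻¹) =
      (B i)⁻¹ (1 - (1 - l i) * y) * B i u := by
    rw [map_mul, ← MulChar.inv_apply', inv_inv]
  simp only [pdnSummand, h1z, hlz, hB, prod_mul_distrib]
  rw [hz, ← MulChar.prod_apply_of_isUnit _ B hu.isUnit]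
  simp only [map_mul, ← MulChar.inv_apply', mul_inv, inv_inv, MulChar.mul_apply]
  ring

end PeriodFunction

theorem statement_6_general (F : Type) [Field F] [Fintype F]
    (n : ℕ) (A C : MulChar F ℂ) (B : Fin n → MulChar F ℂ) (l : Fin n → F) :
    PDn n A B C l =
      A (-1) * PDn n A B (A * C⁻¹ * ∏ i, B i) (fun i => 1 - l i) := by
  classical
  set C' := A * C⁻¹ * ∏ i, B i
  rw [PDn_eq_sum_pdnSummand, PDn_eq_sum_pdnSummand, ← sum_erase univ (pdnSummand_one A B C l),
    ← sum_erase univ (pdnSummand_one A B C' _), mul_sum]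
  have hmaps (y : F) (_ : y ∈ univ.erase 1) : y / (y - 1) ∈ univ.erase 1 :=
    mem_erase.mpr ⟨div_sub_one_ne_one y, mem_univ _⟩
  have hinv (y : F) (hy : y ∈ univ.erase 1) : y / (y - 1) / (y / (y - 1) - 1) = y :=
    div_sub_one_div_div_sub_one_sub_one (ne_of_mem_erase hy)
  exact (sum_nbij' (fun y => y / (y - 1)) (fun y => y / (y - 1)) hmaps hmaps hinv hinv
    fun y hy => (pdnSummand_div_sub_one A B C l (ne_of_mem_erase hy)).symm).symm

/-- transformation `λᵢ ↦ 1 - λᵢ` for `ℙ_D^{(n)}`. -/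
theorem statement_6 (F : Type) [Field F] [Fintype F] (hq : Odd (Fintype.card F))
    (n : ℕ) (A C : MulChar F ℂ) (B : Fin n → MulChar F ℂ) (l : Fin n → F) :
    PDn n A B C l =
      A (-1) * PDn n A B (A * C⁻¹ * ∏ i, B i) (fun i => 1 - l i) :=
  statement_6_general F n A C B l
end

section
/- Let q be a power of an odd prime. Let A, B₁, …, B_n, C be multiplicative characters of 𝔽_q^× such that the Jacobi sums J(A, CĀ) and J(A, C̄B₁B₂⋯B_n) are both nonzero. Then for any λ₁, …, λ_n ∈ 𝔽_q, 𝔽_D^{(n)}[A; B₁,…,B_n; C; λ₁,…,λ_n] = ( J(A, C̄B₁B₂⋯B_n) / (A(−1)·J(A, CĀ)) ) · 𝔽_D^{(n)}[A; B₁,…,B_n; A·C̄·B₁B₂⋯B_n; 1−λ₁, …, 1−λ_n]. -/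
/-!
The substitution `y ↦ y / (y - 1)` is an involution of `𝔽_q ∖ {1}`. With `u = y - 1` it sends
`1 - y` to `-u`, `1 - y / u` to `(-u)⁻¹` and `1 - (1 - λᵢ) y / u` to `(1 - λᵢ y) (-u)⁻¹`, so it turns
the summand of `ℙ_D^{(n)}[A; B; A C̄ ∏ Bᵢ; 1 - λ]` into `A(-1)` times the summand of
`ℙ_D^{(n)}[A; B; C; λ]`: all character values at `u` cancel. The normalising Jacobi sum of the
right-hand side is `J(A, C̄ ∏ Bᵢ)`, since `(A C̄ ∏ Bᵢ) Ā = C̄ ∏ Bᵢ`.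
-/

open Finset

namespace MulChar

theorem prod_apply_of_isUnit_s7 {R R' ι : Type*} [CommMonoid R] [CommMonoidWithZero R']
    (s : Finset ι) (χ : ι → MulChar R R') {a : R} (ha : IsUnit a) :
    (∏ i ∈ s, χ i) a = ∏ i ∈ s, χ i a := by
  induction s using Finset.cons_induction with
  | empty => exact one_apply ha
  | cons i s hi ih => rw [prod_cons, prod_cons, mul_apply, ih]

variable {R R' : Type*} [Field R] [CommGroupWithZero R'] (χ : MulChar R R')

theorem inv_apply_neg_one : χ⁻¹ (-1) = χ (-1) := by
  rw [inv_apply', inv_neg_one]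

theorem apply_mul_inv (a b : R) : χ (a * b⁻¹) = χ a * χ⁻¹ b := by
  rw [map_mul, inv_apply']

end MulChar

section DivSubOne

variable {F : Type} [Field F]

theorem div_sub_one_ne_one_s7 {y : F} (hy : y ≠ 1) : y / (y - 1) ≠ 1 := by
  rw [Ne, div_eq_one_iff_eq (sub_ne_zero.mpr hy)]
  intro h
  simpa using congrArg (y - ·) h

theorem div_sub_one_div_sub_one {y : F} (hy : y ≠ 1) : y / (y - 1) / (y / (y - 1) - 1) = y := by
  have hu : y - 1 ≠ 0 := sub_ne_zero.mpr hy
  field_simp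
  ring

theorem sum_erase_one_comp_div_sub_one [Fintype F] [DecidableEq F] {M : Type*}
    [AddCommMonoid M] (g : F → M) :
    ∑ y ∈ univ.erase 1, g (y / (y - 1)) = ∑ y ∈ univ.erase 1, g y := by
  have hmaps : ∀ y ∈ univ.erase (1 : F), y / (y - 1) ∈ univ.erase 1 := by
    simpa using fun y => div_sub_one_ne_one_s7 (y := y)
  have hinv : ∀ y ∈ univ.erase (1 : F), y / (y - 1) / (y / (y - 1) - 1) = y := by
    simpa using fun y => div_sub_one_div_sub_one (y := y)
  exact sum_nbij' _ _ hmaps hmaps hinv hinv fun _ _ => rfl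

end DivSubOne

section PeriodFunction

variable {F : Type} [Field F] (n : ℕ) (A : MulChar F ℂ) (B : Fin n → MulChar F ℂ)
  (C : MulChar F ℂ) (l : Fin n → F)

noncomputable def PDnTerm (y : F) : ℂ :=
  A y * (C * A⁻¹) (1 - y) * ∏ i, (B i)⁻¹ (1 - l i * y)

theorem PDn_eq_sum_PDnTerm [Fintype F] : PDn n A B C l = ∑ y, PDnTerm n A B C l y := rfl

theorem PDnTerm_one : PDnTerm n A B C l 1 = 0 := by
  rw [PDnTerm, sub_self, MulChar.map_zero, mul_zero, zero_mul]

theorem PDnTerm_eq_mul_PDnTerm_div_sub_one {y : F} (hy : y ≠ 1) :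
    PDnTerm n A B C l y =
      A (-1) * PDnTerm n A B (A * C⁻¹ * ∏ i, B i) (fun i => 1 - l i) (y / (y - 1)) := by
  set ψ := C⁻¹ * ∏ i, B i
  have hy1 : y - 1 ≠ 0 := sub_ne_zero.mpr hy
  have hu : IsUnit (-(y - 1)) := (neg_ne_zero.mpr hy1).isUnit
  have hchar : (A * C⁻¹ * ∏ i, B i) * A⁻¹ = ψ := by
    rw [mul_assoc A, mul_inv_cancel_comm]
  have hCA : C * A⁻¹ = ψ⁻¹ * A⁻¹ * ∏ i, B i := by
    rw [mul_inv_rev, inv_inv, mul_comm _ (∏ i, B i), ← mul_assoc, ← mul_assoc, mul_inv_cancel,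
      one_mul]
  have h1y : 1 - y = -(y - 1) := by ring
  have h1z : 1 - y / (y - 1) = (-(y - 1))⁻¹ := by
    field_simp
    ring
  have h1lz : ∀ i, 1 - (1 - l i) * (y / (y - 1)) = (1 - l i * y) * (-(y - 1))⁻¹ := by
    intro i
    field_simp
    ring
  have hA : A⁻¹ (-(y - 1)) = A (-1) * A⁻¹ (y - 1) := by
    rw [neg_eq_neg_one_mul, map_mul, MulChar.inv_apply_neg_one]
  rw [PDnTerm, PDnTerm, hchar, hCA, h1y, h1z, ← MulChar.inv_apply']
  simp only [h1lz]
  simp only [div_eq_mul_inv, MulChar.apply_mul_inv, inv_inv, MulChar.mul_apply,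
    MulChar.prod_apply_of_isUnit_s7 _ _ hu, hA, prod_mul_distrib]
  ring

theorem PDn_eq_mul_PDn_one_sub [Fintype F] :
    PDn n A B C l = A (-1) * PDn n A B (A * C⁻¹ * ∏ i, B i) (fun i => 1 - l i) := by
  classical
  set C' := A * C⁻¹ * ∏ i, B i
  rw [PDn_eq_sum_PDnTerm, PDn_eq_sum_PDnTerm, ← sum_erase univ (PDnTerm_one n A B C l),
    ← sum_erase univ (PDnTerm_one n A B C' _),
    ← sum_erase_one_comp_div_sub_one (PDnTerm n A B C' _), mul_sum]
  exact sum_congr rfl fun y hy =>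
    PDnTerm_eq_mul_PDnTerm_div_sub_one n A B C l (ne_of_mem_erase hy)

end PeriodFunction

theorem statement_7_general (F : Type) [Field F] [Fintype F]
    (n : ℕ) (A C : MulChar F ℂ) (B : Fin n → MulChar F ℂ)
    (hJ2 : jacobiSum' A (C⁻¹ * ∏ i, B i) ≠ 0)
    (l : Fin n → F) :
    FDn n A B C l =
      jacobiSum' A (C⁻¹ * ∏ i, B i) / (A (-1) * jacobiSum' A (C * A⁻¹)) *
        FDn n A B (A * C⁻¹ * ∏ i, B i) (fun i => 1 - l i) := by
  have hchar : (A * C⁻¹ * ∏ i, B i) * A⁻¹ = C⁻¹ * ∏ i, B i := by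
    rw [mul_assoc A, mul_inv_cancel_comm]
  have hinv : (A (-1))⁻¹ = A (-1) := by
    rw [← MulChar.inv_apply_eq_inv', MulChar.inv_apply_neg_one]
  rw [FDn, FDn, hchar, PDn_eq_mul_PDn_one_sub, mul_comm (_ / _), div_mul_div_cancel₀ hJ2,
    div_mul_eq_div_div, div_eq_mul_inv _ (A (-1)), hinv, mul_comm]

/-- transformation `λᵢ ↦ 1 - λᵢ` for `𝔽_D^{(n)}`. -/
theorem statement_7 (F : Type) [Field F] [Fintype F] (hq : Odd (Fintype.card F))
    (n : ℕ) (A C : MulChar F ℂ) (B : Fin n → MulChar F ℂ)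
    (hJ1 : jacobiSum' A (C * A⁻¹) ≠ 0)
    (hJ2 : jacobiSum' A (C⁻¹ * ∏ i, B i) ≠ 0)
    (l : Fin n → F) :
    FDn n A B C l =
      jacobiSum' A (C⁻¹ * ∏ i, B i) / (A (-1) * jacobiSum' A (C * A⁻¹)) *
        FDn n A B (A * C⁻¹ * ∏ i, B i) (fun i => 1 - l i) :=
  statement_7_general F n A C B hJ2 l
end

section
/- Let q be a power of an odd prime. For any multiplicative characters A, B, C of 𝔽_q^× and any λ ∈ 𝔽_q, ℙ_D^{(1)}[A; B; C; λ] = (AC)(−1)·B̄(−λ)·ℙ_D^{(1)}[C̄B; B; ĀB; λ⁻¹] + δ(λ)·J(A, CĀ), where λ⁻¹ denotes the inverse in 𝔽_q for λ ≠ 0 (when λ = 0 the first term on the right vanishes since B̄(0) = 0, so any convention for 0⁻¹, e.g. 0⁻¹ = 0, gives a valid statement). -/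
open Finset

/-! Substitute `y ↦ y⁻¹` in the sum defining `ℙ_D^{(1)}[A; B; C; λ]`. For `y, λ ≠ 0`,
`1 - y⁻¹ = -(1 - y) y⁻¹` and `1 - λ y⁻¹ = -λ (1 - λ⁻¹ y) y⁻¹`, so multiplicativity splits off the
constants `(CĀ)(-1) = (AC)(-1)` and `B̄(-λ)`, while the three factors evaluated at `y⁻¹` combine to
`(A · CĀ · B̄)(y⁻¹) = (C̄B)(y)`. At `λ = 0` the factor `B̄(1 - λy)` is `1` and the sum is `J(A, CĀ)`. -/

namespace MulChar

lemma inv_apply_neg_one_s8 {F R : Type*} [Field F] [CommRing R] (χ : MulChar F R) :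
    χ⁻¹ (-1) = χ (-1) := by
  rw [inv_apply', inv_neg_one]

end MulChar

section

variable {F : Type} [Field F]

lemma P1_summand_at_inv (A B C : MulChar F ℂ) {l : F} (hl : l ≠ 0) (y : F) :
    A y⁻¹ * (C * A⁻¹) (1 - y⁻¹) * B⁻¹ (1 - l * y⁻¹) =
      (A * C) (-1) * B⁻¹ (-l) * ((C⁻¹ * B) y * (C * A⁻¹) (1 - y) * B⁻¹ (1 - l⁻¹ * y)) := by
  rcases eq_or_ne y 0 with rfl | hy
  · simp [MulChar.map_nonunit]
  have h1 : (1 : F) - y⁻¹ = -1 * ((1 - y) * y⁻¹) := by field_simp; ring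
  have h2 : (1 : F) - l * y⁻¹ = -l * ((1 - l⁻¹ * y) * y⁻¹) := by field_simp; ring
  have hy_inv : A y⁻¹ * (C * A⁻¹) y⁻¹ * B⁻¹ y⁻¹ = (C⁻¹ * B) y := by
    rw [← MulChar.mul_apply, ← MulChar.mul_apply, ← MulChar.inv_apply']
    congr 1
    simp only [mul_inv, inv_inv]
    rw [mul_left_comm, inv_mul_cancel, mul_one]
  have hsign : (C * A⁻¹) (-1 : F) = (A * C) (-1) := by
    rw [MulChar.mul_apply, MulChar.mul_apply, MulChar.inv_apply_neg_one_s8, mul_comm]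
  rw [h1, h2, map_mul, map_mul, map_mul, map_mul, ← hy_inv, hsign]
  ring

variable [Fintype F]

lemma P1_zero (A B C : MulChar F ℂ) : P1 A B C 0 = jacobiSum' A (C * A⁻¹) := by
  simp [P1, jacobiSum']

lemma P1_eq_mul_P1_inv (A B C : MulChar F ℂ) {l : F} (hl : l ≠ 0) :
    P1 A B C l = (A * C) (-1) * B⁻¹ (-l) * P1 (C⁻¹ * B) B (A⁻¹ * B) l⁻¹ := by
  have hchar : A⁻¹ * B * (C⁻¹ * B)⁻¹ = C * A⁻¹ := by
    rw [mul_inv, inv_inv, mul_mul_mul_comm, mul_inv_cancel, mul_one, mul_comm]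
  rw [P1, P1, hchar, ← Equiv.sum_comp (Equiv.inv F), mul_sum]
  exact sum_congr rfl fun y _ => P1_summand_at_inv A B C hl y

end

theorem statement_8_general (F : Type) [Field F] [Fintype F]
    (A B C : MulChar F ℂ) (l : F) :
    P1 A B C l =
      (A * C) (-1) * B⁻¹ (-l) * P1 (C⁻¹ * B) B (A⁻¹ * B) l⁻¹ +
        deltaC l * jacobiSum' A (C * A⁻¹) := by
  rcases eq_or_ne l 0 with rfl | hl
  · simp [P1_zero, deltaC, MulChar.map_nonunit]
  · simp [P1_eq_mul_P1_inv A B C hl, deltaC, hl]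

/-- transformation `λ ↦ λ⁻¹` for `ℙ_D^{(1)}`. -/
theorem statement_8 (F : Type) [Field F] [Fintype F] (hq : Odd (Fintype.card F))
    (A B C : MulChar F ℂ) (l : F) :
    P1 A B C l =
      (A * C) (-1) * B⁻¹ (-l) * P1 (C⁻¹ * B) B (A⁻¹ * B) l⁻¹ +
        deltaC l * jacobiSum' A (C * A⁻¹) :=
  statement_8_general F A B C l
end

section
/- Let q be a power of an odd prime. For any multiplicative characters A, B, C of 𝔽_q^× and any λ ∈ 𝔽_q, the following two identities hold: ℙ_D^{(1)}[A; B; C; λ] = B̄(1−λ)·ℙ_D^{(1)}[ĀC; B; C; λ/(λ−1)] + δ(1−λ)·J(A, C·(AB)⁻¹), and ℙ_D^{(1)}[A; B; C; λ] = Ā(1−λ)·ℙ_D^{(1)}[A; C·B̄; C; λ/(λ−1)] + δ(1−λ)·J(A, C·(AB)⁻¹). (When λ = 1 the first term on each right-hand side vanishes since B̄(0) = Ā(0) = 0, so any convention for division by zero gives a valid statement.) -/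
open Finset

/-!
Both identities are changes of variable in the sum defining `ℙ_D^{(1)}`; at `λ = 1` they reduce to
`ℙ_D^{(1)}[A; B; C; 1] = J(A, C·(AB)⁻¹)`. The first comes from `y ↦ 1 - y`, using
`1 - λy = (1 - λ)(1 - λ/(λ-1)·(1 - y))`. The second comes from the Möbius substitution
`y ↦ (1 - λ)y/(1 - λy)`, under which `1 - y` and `1 - λ/(λ-1)·y` become `(1 - y)/(1 - λy)` and
`1/(1 - λy)`. Thanks to `0⁻¹ = 0`, the map `y ↦ (1 - λ)(y⁻¹ - λ)⁻¹` permutes all of `F`, and it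
agrees with that substitution away from the two points where one of the summands has a factor `χ(0)`.
-/

section PfaffTransformations

variable {F : Type} [Field F]

lemma MulChar.apply_inv₀ (χ : MulChar F ℂ) (x : F) : χ x⁻¹ = (χ x)⁻¹ := by
  rw [← MulChar.inv_apply', MulChar.inv_apply_eq_inv']

def pfaffPerm {l : F} (hl : 1 - l ≠ 0) : Equiv.Perm F :=
  (Equiv.inv F).trans <| (Equiv.subRight l).trans <| (Equiv.inv F).trans <| Equiv.mulLeft₀ _ hl

lemma pfaffPerm_apply {l : F} (hl : 1 - l ≠ 0) (y : F) :
    pfaffPerm hl y = (1 - l) * (y⁻¹ - l)⁻¹ := rfl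

lemma P1_summand_mobius (A B C : MulChar F ℂ) {l y : F} (hl : 1 - l ≠ 0) (hd : 1 - l * y ≠ 0) :
    A y * (C * A⁻¹) (1 - y) * B⁻¹ (1 - l * y) =
      A⁻¹ (1 - l) * (A ((1 - l) * y / (1 - l * y)) * (C * A⁻¹) (1 - (1 - l) * y / (1 - l * y)) *
        (C * B⁻¹)⁻¹ (1 - l / (l - 1) * ((1 - l) * y / (1 - l * y)))) := by
  have hl' : l - 1 ≠ 0 := fun h => hl (by linear_combination -h)
  have h1 : 1 - (1 - l) * y / (1 - l * y) = (1 - y) * (1 - l * y)⁻¹ := by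
    field_simp
    ring
  have h2 : 1 - l / (l - 1) * ((1 - l) * y / (1 - l * y)) = (1 - l * y)⁻¹ := by
    field_simp
    ring
  rw [h1, h2]
  have hA : A (1 - l) ≠ 0 := MulChar.apply_ne_zero_iff.mpr hl.isUnit
  have hAd : A (1 - l * y) ≠ 0 := MulChar.apply_ne_zero_iff.mpr hd.isUnit
  have hCd : C (1 - l * y) ≠ 0 := MulChar.apply_ne_zero_iff.mpr hd.isUnit
  generalize 1 - l * y = d at *
  simp only [div_eq_mul_inv, map_mul, MulChar.apply_inv₀, MulChar.mul_apply,
    MulChar.inv_apply_eq_inv', mul_inv, inv_inv]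
  field_simp

variable [Fintype F]

lemma P1_one (A B C : MulChar F ℂ) : P1 A B C 1 = jacobiSum' A (C * (A * B)⁻¹) := by
  refine Finset.sum_congr rfl fun x _ => ?_
  simp only [one_mul, MulChar.mul_apply, MulChar.inv_apply_eq_inv', mul_inv]
  ring

lemma P1_eq_mul_P1_one_sub (A B C : MulChar F ℂ) {l : F} (hl : 1 - l ≠ 0) :
    P1 A B C l = B⁻¹ (1 - l) * P1 (A⁻¹ * C) B C (l / (l - 1)) := by
  have hl' : l - 1 ≠ 0 := fun h => hl (by linear_combination -h)
  have hC : C * (A⁻¹ * C)⁻¹ = A := by group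
  rw [P1, P1, hC, Finset.mul_sum]
  refine Fintype.sum_equiv (Equiv.subLeft 1) _ _ fun y => ?_
  have hfactor : 1 - l * y = (1 - l) * (1 - l / (l - 1) * (1 - y)) := by
    field_simp
    ring
  simp only [Equiv.subLeft_apply, sub_sub_cancel, hfactor, map_mul, MulChar.mul_apply,
    MulChar.inv_apply_eq_inv']
  ring

lemma P1_eq_mul_P1_mobius (A B C : MulChar F ℂ) {l : F} (hl : 1 - l ≠ 0) :
    P1 A B C l = A⁻¹ (1 - l) * P1 A (C * B⁻¹) C (l / (l - 1)) := by
  have hl' : l - 1 ≠ 0 := fun h => hl (by linear_combination -h)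
  rw [P1, P1, Finset.mul_sum]
  refine Fintype.sum_equiv (pfaffPerm hl) _ _ fun y => ?_
  rw [pfaffPerm_apply]
  rcases eq_or_ne y 0 with rfl | hy
  · rcases eq_or_ne l 0 with rfl | hl0
    · simp only [inv_zero, sub_zero, mul_zero, MulChar.map_zero, zero_mul]
    · have hpole : 1 - l / (l - 1) * ((1 - l) * (0⁻¹ - l)⁻¹) = 0 := by
        rw [inv_zero, zero_sub]
        field_simp
        ring
      simp only [hpole, MulChar.map_zero, zero_mul, mul_zero]
  rcases eq_or_ne (1 - l * y) 0 with hd | hd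
  · have hinv : y⁻¹ = l := by
      rw [inv_eq_of_mul_eq_one_right]
      linear_combination -hd
    simp only [hd, hinv, sub_self, inv_zero, mul_zero, zero_mul, MulChar.map_zero]
  have hu : (1 - l) * (y⁻¹ - l)⁻¹ = (1 - l) * y / (1 - l * y) := by
    field_simp
  rw [hu]
  exact P1_summand_mobius A B C hl hd

end PfaffTransformations

theorem statement_10_general (F : Type) [Field F] [Fintype F]
    (A B C : MulChar F ℂ) (l : F) :
    P1 A B C l =
        B⁻¹ (1 - l) * P1 (A⁻¹ * C) B C (l / (l - 1)) +
          deltaC (1 - l) * jacobiSum' A (C * (A * B)⁻¹) ∧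
      P1 A B C l =
        A⁻¹ (1 - l) * P1 A (C * B⁻¹) C (l / (l - 1)) +
          deltaC (1 - l) * jacobiSum' A (C * (A * B)⁻¹) := by
  by_cases hl : 1 - l = 0
  · obtain rfl : l = 1 := (sub_eq_zero.mp hl).symm
    simp only [deltaC, sub_self, MulChar.map_zero, zero_mul, if_pos, one_mul, zero_add, P1_one,
      and_self]
  · simp only [deltaC, if_neg hl, zero_mul, add_zero]
    exact ⟨P1_eq_mul_P1_one_sub A B C hl, P1_eq_mul_P1_mobius A B C hl⟩

/-- Pfaff–Kummer type transformations `λ ↦ λ/(λ-1)` for `ℙ_D^{(1)}`. -/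
theorem statement_10 (F : Type) [Field F] [Fintype F] (hq : Odd (Fintype.card F))
    (A B C : MulChar F ℂ) (l : F) :
    P1 A B C l =
        B⁻¹ (1 - l) * P1 (A⁻¹ * C) B C (l / (l - 1)) +
          deltaC (1 - l) * jacobiSum' A (C * (A * B)⁻¹) ∧
      P1 A B C l =
        A⁻¹ (1 - l) * P1 A (C * B⁻¹) C (l / (l - 1)) +
          deltaC (1 - l) * jacobiSum' A (C * (A * B)⁻¹) :=
  statement_10_general F A B C l
end

section
/- Let q be a power of an odd prime. For any multiplicative characters A, B₁, …, B_n, C of 𝔽_q^× and any λ₁, …, λ_n ∈ 𝔽_q with λ_i ≠ 1 for all i, ℙ_D^{(n)}[A; B₁,…,B_n; C; λ₁,…,λ_n] = ( ∏_{i=1}^n B̄_i(1−λ_i) ) · ℙ_D^{(n)}[ĀC; B₁,…,B_n; C; λ₁/(λ₁−1), …, λ_n/(λ_n−1)]. -/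
open Finset

/-- Pfaff–Kummer type transformation `λᵢ ↦ λᵢ/(λᵢ-1)` for `ℙ_D^{(n)}`. -/
theorem statement_11 (F : Type) [Field F] [Fintype F] (hq : Odd (Fintype.card F))
    (n : ℕ) (A C : MulChar F ℂ) (B : Fin n → MulChar F ℂ)
    (l : Fin n → F) (hl : ∀ i, l i ≠ 1) :
    PDn n A B C l =
      (∏ i, (B i)⁻¹ (1 - l i)) *
        PDn n (A⁻¹ * C) B C (fun i => l i / (l i - 1)) := by
  classical
  unfold PDn
  rw [Finset.mul_sum, ← Equiv.sum_comp (Equiv.subLeft (1 : F))]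
  refine Finset.sum_congr rfl fun y _ => ?_
  simp only [Equiv.subLeft_apply]
  have hC : C * (A⁻¹ * C)⁻¹ = A := by group
  have hprod : (∏ i, (B i)⁻¹ (1 - l i * (1 - y)))
      = ∏ i, ((B i)⁻¹ (1 - l i) * (B i)⁻¹ (1 - l i / (l i - 1) * y)) := by
    refine Finset.prod_congr rfl fun i _ => ?_
    rw [← map_mul]
    congr 1
    have hi : l i - 1 ≠ 0 := sub_ne_zero.mpr (hl i)
    field_simp
    ring
  rw [hprod, Finset.prod_mul_distrib, hC, sub_sub_cancel]
  have hcomm : (C * A⁻¹) y = (A⁻¹ * C) y := by rw [mul_comm]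
  rw [hcomm]
  ring
end

section
/- Let q be a power of an odd prime. For any multiplicative characters A, B₁, B₂ of 𝔽_q^×, any λ₁ ∈ 𝔽_q with λ₁ ≠ 0, and any λ₂ ∈ 𝔽_q, ℙ_D^{(2)}[A; B₁, B₂; A; λ₁, λ₂] = Ā(λ₁) · ℙ_D^{(1)}[A; B₂; A·B̄₁; λ₂/λ₁] − B̄₁(1−λ₁)·B̄₂(1−λ₂); here ℙ_D^{(1)}[A; B₂; A·B̄₁; λ₂/λ₁] = Σ_{z∈𝔽_q} A(z)·B̄₁(1−z)·B̄₂(1−(λ₂/λ₁)z). -/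
open Finset

/-- reduction of `ℙ_D^{(2)}` when `C = A`. -/
theorem statement_15 (F : Type) [Field F] [Fintype F] (hq : Odd (Fintype.card F))
    (A B₁ B₂ : MulChar F ℂ) (l₁ l₂ : F) (hl₁ : l₁ ≠ 0) :
    P2 A B₁ B₂ A l₁ l₂ =
      A⁻¹ l₁ * P1 A B₂ (A * B₁⁻¹) (l₂ / l₁) -
        B₁⁻¹ (1 - l₁) * B₂⁻¹ (1 - l₂) := by
  classical
  have key : A⁻¹ l₁ * P1 A B₂ (A * B₁⁻¹) (l₂ / l₁) =
      ∑ y : F, A y * B₁⁻¹ (1 - l₁ * y) * B₂⁻¹ (1 - l₂ * y) := by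
    rw [P1, Finset.mul_sum]
    have h1 : A * B₁⁻¹ * A⁻¹ = B₁⁻¹ := by
      rw [mul_comm A B₁⁻¹, mul_assoc, mul_inv_cancel, mul_one]
    rw [h1]
    refine (Fintype.sum_equiv (Equiv.mulLeft₀ l₁ hl₁) _ _ fun y => ?_).symm
    show A y * B₁⁻¹ (1 - l₁ * y) * B₂⁻¹ (1 - l₂ * y) =
      A⁻¹ l₁ * (A (l₁ * y) * B₁⁻¹ (1 - l₁ * y) * B₂⁻¹ (1 - l₂ / l₁ * (l₁ * y)))
    have h2 : l₂ / l₁ * (l₁ * y) = l₂ * y := by field_simp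
    have h5 : A⁻¹ l₁ * A l₁ = 1 := by
      rw [show A⁻¹ l₁ * A l₁ = (A⁻¹ * A) l₁ from rfl, inv_mul_cancel]
      exact MulChar.one_apply (isUnit_iff_ne_zero.2 hl₁)
    rw [h2, map_mul]
    calc A y * B₁⁻¹ (1 - l₁ * y) * B₂⁻¹ (1 - l₂ * y)
        = (1 : ℂ) * (A y * B₁⁻¹ (1 - l₁ * y) * B₂⁻¹ (1 - l₂ * y)) := by ring
      _ = (A⁻¹ l₁ * A l₁) * (A y * B₁⁻¹ (1 - l₁ * y) * B₂⁻¹ (1 - l₂ * y)) := by rw [h5]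
      _ = A⁻¹ l₁ * (A l₁ * A y * B₁⁻¹ (1 - l₁ * y) * B₂⁻¹ (1 - l₂ * y)) := by ring
  rw [key, P2]
  have hdelta : B₁⁻¹ (1 - l₁) * B₂⁻¹ (1 - l₂) =
      ∑ y : F, (if y = 1 then B₁⁻¹ (1 - l₁ * y) * B₂⁻¹ (1 - l₂ * y) else 0) := by
    rw [Finset.sum_ite_eq' Finset.univ (1 : F)]
    simp
  rw [hdelta, ← Finset.sum_sub_distrib]
  refine Finset.sum_congr rfl fun y _ => ?_
  by_cases hy : y = 1
  · subst hy
    simp [MulChar.map_nonunit]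
  · have hu : IsUnit (1 - y) := by
      simp only [isUnit_iff_ne_zero, sub_ne_zero]
      exact fun h => hy h.symm
    rw [if_neg hy, mul_inv_cancel (a := A), MulChar.one_apply hu]
    ring
end

section
/- Let q be a power of an odd prime. For any multiplicative characters A, B, C of 𝔽_q^×, any λ₂ ∈ 𝔽_q with λ₂ ≠ 1, and any λ₁ ∈ 𝔽_q, ℙ_D^{(2)}[A; B, C·B̄; C; λ₁, λ₂] = (B·Ā)(λ₂−1)·B̄(λ₂−λ₁)·ℙ_D^{(1)}[B·C̄; B; A·B·C̄; (1−λ₁)/(λ₂−λ₁)] − A(−1)·(B·C̄)(λ₂)·B̄(λ₁) + δ(λ₂−λ₁)·Ā(λ₁−1)·J(A, C̄). (When λ₁ = λ₂ the first term on the right vanishes since B̄(0) = 0, so any convention for division by zero gives a valid statement.) -/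
open Finset

/-!
The Möbius substitution `y = (1 - t) / (l₂ - t)` maps `F ∖ {l₂}` onto `F ∖ {1}` and turns the
summand of `ℙ_D^{(2)}[A; B₁, B₂; C; l₁, l₂]` into
`(C Ā B̄₂)(l₂ - 1) · A(1 - t) B̄₁((l₂ - l₁) - (1 - l₁) t) B̄₂(t) · (B₁ B₂ C̄)(l₂ - t)`.
For `B₂ = C B̄₁` the last factor is the trivial character, equal to `1` except at `t = l₂`; that
point produces the term `-A(-1) (B C̄)(l₂) B̄(l₁)`. The remaining full sum is
`B̄(l₂ - l₁) ℙ_D^{(1)}` when `l₁ ≠ l₂` and collapses to a Jacobi sum when `l₁ = l₂`.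
-/

namespace MulChar

variable {R R' : Type*} [CommGroupWithZero R] [CommMonoidWithZero R']

lemma apply_div (χ : MulChar R R') (a b : R) : χ (a / b) = χ a * χ⁻¹ b := by
  rw [div_eq_mul_inv, map_mul, inv_apply']

lemma inv_apply_mul_apply {χ : MulChar R R'} {a : R} (ha : a ≠ 0) : χ⁻¹ a * χ a = 1 := by
  rw [← mul_apply, inv_mul, one_apply (Ne.isUnit ha)]

end MulChar

section

variable {F : Type*} [Field F]

lemma sum_mul_one_apply_sub [Fintype F] [DecidableEq F] {R : Type*} [CommRing R]
    (H : F → R) (c : F) : ∑ t, H t * (1 : MulChar F R) (c - t) = ∑ t, H t - H c := by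
  rw [← sum_erase_add _ _ (mem_univ c), sub_self, MulChar.map_zero, mul_zero,
    add_zero, ← sum_erase_eq_sub (mem_univ c)]
  refine sum_congr rfl fun t ht => ?_
  rw [MulChar.one_apply (sub_ne_zero.mpr (ne_of_mem_erase ht).symm).isUnit, mul_one]

lemma sum_erase_comp_div_sub_sub [Fintype F] [DecidableEq F] {M : Type*} [AddCommMonoid M]
    {a b : F} (hab : a ≠ b) (f : F → M) :
    ∑ t ∈ univ.erase b, f ((a - t) / (b - t)) = ∑ y ∈ univ.erase 1, f y := by
  have hba : b - a ≠ 0 := sub_ne_zero.mpr hab.symm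
  refine sum_nbij' (fun t => (a - t) / (b - t)) (fun y => (a - b * y) / (1 - y))
    ?_ ?_ ?_ ?_ (fun _ _ => rfl)
  · intro t ht
    have hbt : b - t ≠ 0 := sub_ne_zero.mpr (ne_of_mem_erase ht).symm
    simp only [mem_erase, mem_univ, and_true, ne_eq, div_eq_one_iff_eq hbt]
    exact fun h => hab (by simpa using h)
  · intro y hy
    have hy : 1 - y ≠ 0 := sub_ne_zero.mpr (ne_of_mem_erase hy).symm
    simp only [mem_erase, mem_univ, and_true, ne_eq, div_eq_iff hy]
    exact fun h => hab (by linear_combination h)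
  · intro t ht
    have hbt : b - t ≠ 0 := sub_ne_zero.mpr (ne_of_mem_erase ht).symm
    field_simp
    rw [show b - t - (a - t) = b - a by ring, div_eq_iff hba]
    ring
  · intro y hy
    have hy : 1 - y ≠ 0 := sub_ne_zero.mpr (ne_of_mem_erase hy).symm
    field_simp
    rw [show b * (1 - y) - (a - b * y) = b - a by ring, div_eq_iff hba]
    ring

lemma P2_summand_comp_div_sub_sub (A B₁ B₂ C : MulChar F ℂ) (l₁ l₂ : F) {t : F} (ht : t ≠ l₂) :
    A ((1 - t) / (l₂ - t)) * (C * A⁻¹) (1 - (1 - t) / (l₂ - t)) *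
        B₁⁻¹ (1 - l₁ * ((1 - t) / (l₂ - t))) * B₂⁻¹ (1 - l₂ * ((1 - t) / (l₂ - t))) =
      (C * A⁻¹ * B₂⁻¹) (l₂ - 1) *
        (A (1 - t) * B₁⁻¹ (l₂ - l₁ - (1 - l₁) * t) * B₂⁻¹ t * (B₁ * B₂ * C⁻¹) (l₂ - t)) := by
  have hs : l₂ - t ≠ 0 := sub_ne_zero.mpr ht.symm
  have e1 : 1 - (1 - t) / (l₂ - t) = (l₂ - 1) / (l₂ - t) := by field_simp; ring
  have e2 : 1 - l₁ * ((1 - t) / (l₂ - t)) = (l₂ - l₁ - (1 - l₁) * t) / (l₂ - t) := by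
    field_simp; ring
  have e3 : 1 - l₂ * ((1 - t) / (l₂ - t)) = t * (l₂ - 1) / (l₂ - t) := by field_simp; ring
  have hchar : B₁ * B₂ * C⁻¹ = A⁻¹ * (C * A⁻¹)⁻¹ * B₁⁻¹⁻¹ * B₂⁻¹⁻¹ := by
    simp [mul_comm, mul_left_comm, mul_assoc]
  rw [e1, e2, e3, hchar]
  simp only [MulChar.apply_div, map_mul, MulChar.mul_apply]
  ring

lemma mul_apply_sub_one_mul_eq {R : Type*} [CommRing R] (A B C : MulChar F R) (l₁ : F) {l₂ : F}
    (hl₂ : l₂ ≠ 1) :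
    (B * A⁻¹) (l₂ - 1) * (A (1 - l₂) * B⁻¹ (l₂ - l₁ - (1 - l₁) * l₂) * (B * C⁻¹) l₂) =
      A (-1) * (B * C⁻¹) l₂ * B⁻¹ l₁ := by
  have hx : l₂ - 1 ≠ 0 := sub_ne_zero.mpr hl₂
  have hA := MulChar.inv_apply_mul_apply (χ := A) hx
  have hB := MulChar.inv_apply_mul_apply (χ := B) hx
  rw [show 1 - l₂ = -1 * (l₂ - 1) by ring, show l₂ - l₁ - (1 - l₁) * l₂ = l₁ * (l₂ - 1) by ring,
    map_mul, map_mul, MulChar.mul_apply]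
  linear_combination (A (-1) * (B * C⁻¹) l₂ * B⁻¹ l₁) * (B⁻¹ (l₂ - 1) * B (l₂ - 1) * hA + hB)

end

variable {F : Type} [Field F]

theorem P2_eq_mul_sum [Fintype F] [DecidableEq F] (A B₁ B₂ C : MulChar F ℂ) (l₁ : F) {l₂ : F}
    (hl₂ : l₂ ≠ 1) :
    P2 A B₁ B₂ C l₁ l₂ = (C * A⁻¹ * B₂⁻¹) (l₂ - 1) *
      ∑ t, A (1 - t) * B₁⁻¹ (l₂ - l₁ - (1 - l₁) * t) * B₂⁻¹ t * (B₁ * B₂ * C⁻¹) (l₂ - t) := by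
  set f : F → ℂ := fun y => A y * (C * A⁻¹) (1 - y) * B₁⁻¹ (1 - l₁ * y) * B₂⁻¹ (1 - l₂ * y)
  set g : F → ℂ := fun t =>
    A (1 - t) * B₁⁻¹ (l₂ - l₁ - (1 - l₁) * t) * B₂⁻¹ t * (B₁ * B₂ * C⁻¹) (l₂ - t)
  have hf : f 1 = 0 := by simp only [f, sub_self, MulChar.map_zero, mul_zero, zero_mul]
  have hg : (C * A⁻¹ * B₂⁻¹) (l₂ - 1) * g l₂ = 0 := by
    simp only [g, sub_self, MulChar.map_zero, mul_zero]
  calc P2 A B₁ B₂ C l₁ l₂ = ∑ y ∈ univ.erase 1, f y := (sum_erase _ hf).symm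
    _ = ∑ t ∈ univ.erase l₂, f ((1 - t) / (l₂ - t)) :=
      (sum_erase_comp_div_sub_sub hl₂.symm f).symm
    _ = ∑ t ∈ univ.erase l₂, (C * A⁻¹ * B₂⁻¹) (l₂ - 1) * g t :=
      sum_congr rfl fun t ht => P2_summand_comp_div_sub_sub A B₁ B₂ C l₁ l₂ (ne_of_mem_erase ht)
    _ = (C * A⁻¹ * B₂⁻¹) (l₂ - 1) * ∑ t, g t := by rw [mul_sum]; exact sum_erase _ hg

lemma jacobiSum'_eq_sum_apply_one_sub_mul [Fintype F] (A B : MulChar F ℂ) :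
    jacobiSum' A B = ∑ t, A (1 - t) * B t := by
  rw [show jacobiSum' A B = jacobiSum A B from rfl, jacobiSum_comm, jacobiSum]
  simp only [mul_comm]

lemma sum_eq_inv_apply_mul_P1 [Fintype F] (A B C : MulChar F ℂ) {l₁ l₂ : F} (h : l₁ ≠ l₂) :
    ∑ t, A (1 - t) * B⁻¹ (l₂ - l₁ - (1 - l₁) * t) * (B * C⁻¹) t =
      B⁻¹ (l₂ - l₁) * P1 (B * C⁻¹) B (A * B * C⁻¹) ((1 - l₁) / (l₂ - l₁)) := by
  have hd : l₂ - l₁ ≠ 0 := sub_ne_zero.mpr h.symm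
  have hA : A * B * C⁻¹ * (B * C⁻¹)⁻¹ = A := by group
  rw [P1, hA, mul_sum]
  refine sum_congr rfl fun t _ => ?_
  rw [show l₂ - l₁ - (1 - l₁) * t = (l₂ - l₁) * (1 - (1 - l₁) / (l₂ - l₁) * t) by field_simp,
    map_mul]
  ring

lemma mul_sum_eq_inv_apply_mul_jacobiSum' [Fintype F] (A B C : MulChar F ℂ) {l : F}
    (hl : l ≠ 1) :
    (B * A⁻¹) (l - 1) * ∑ t, A (1 - t) * B⁻¹ (l - l - (1 - l) * t) * (B * C⁻¹) t =
      A⁻¹ (l - 1) * jacobiSum' A C⁻¹ := by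
  have hB : ∀ t, B⁻¹ (l - l - (1 - l) * t) * (B * C⁻¹) t = B⁻¹ (l - 1) * C⁻¹ t := fun t => by
    rw [show l - l - (1 - l) * t = (l - 1) * t by ring, map_mul, mul_assoc, ← MulChar.mul_apply,
      inv_mul_cancel_left]
  have hK : (B * A⁻¹) (l - 1) * B⁻¹ (l - 1) = A⁻¹ (l - 1) := by
    rw [MulChar.mul_apply, mul_right_comm, mul_comm (B _),
      MulChar.inv_apply_mul_apply (sub_ne_zero.mpr hl), one_mul]
  simp only [mul_assoc, hB, jacobiSum'_eq_sum_apply_one_sub_mul, mul_sum]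
  refine sum_congr rfl fun t _ => ?_
  rw [← hK]
  ring

theorem statement_16_general (F : Type) [Field F] [Fintype F]
    (A B C : MulChar F ℂ) (l₁ l₂ : F) (hl₂ : l₂ ≠ 1) :
    P2 A B (C * B⁻¹) C l₁ l₂ =
      (B * A⁻¹) (l₂ - 1) * B⁻¹ (l₂ - l₁) *
          P1 (B * C⁻¹) B (A * B * C⁻¹) ((1 - l₁) / (l₂ - l₁)) -
        A (-1) * (B * C⁻¹) l₂ * B⁻¹ l₁ +
        deltaC (l₂ - l₁) * A⁻¹ (l₁ - 1) * jacobiSum' A C⁻¹ := by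
  classical
  have hK : C * A⁻¹ * (C * B⁻¹)⁻¹ = B * A⁻¹ := by simp [mul_left_comm]
  have hB₂ : (C * B⁻¹)⁻¹ = B * C⁻¹ := by simp
  have hε : B * (C * B⁻¹) * C⁻¹ = 1 := by simp
  rw [P2_eq_mul_sum A B (C * B⁻¹) C l₁ hl₂, hK, hB₂, hε, sum_mul_one_apply_sub, mul_sub,
    mul_apply_sub_one_mul_eq A B C l₁ hl₂, deltaC]
  rcases eq_or_ne l₁ l₂ with rfl | hne
  · rw [mul_sum_eq_inv_apply_mul_jacobiSum' A B C hl₂, sub_self, MulChar.map_zero, if_pos rfl]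
    ring
  · rw [sum_eq_inv_apply_mul_P1 A B C hne, if_neg (sub_ne_zero.mpr hne.symm)]
    ring

/-- reduction of `ℙ_D^{(2)}` when `B₂ = C B̄₁`. -/
theorem statement_16 (F : Type) [Field F] [Fintype F] (hq : Odd (Fintype.card F))
    (A B C : MulChar F ℂ) (l₁ l₂ : F) (hl₂ : l₂ ≠ 1) :
    P2 A B (C * B⁻¹) C l₁ l₂ =
      (B * A⁻¹) (l₂ - 1) * B⁻¹ (l₂ - l₁) *
          P1 (B * C⁻¹) B (A * B * C⁻¹) ((1 - l₁) / (l₂ - l₁)) -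
        A (-1) * (B * C⁻¹) l₂ * B⁻¹ l₁ +
        deltaC (l₂ - l₁) * A⁻¹ (l₁ - 1) * jacobiSum' A C⁻¹ :=
  statement_16_general F A B C l₁ l₂ hl₂
end

section
/- Let q be a power of an odd prime. For any multiplicative characters B₁, B₂, C of 𝔽_q^× and any λ₁, λ₂ ∈ 𝔽_q with λ₁ ∉ {0, 1} and λ₂ ≠ 1, ℙ_D^{(2)}[ε; B₁, B₂; C; λ₁, λ₂] = (C·B̄₁)(1−λ₁)·C̄(−λ₁)·B̄₂(1−λ₂)·ℙ_D^{(1)}[C; B₂; C·B̄₁; λ₂(1−λ₁)/(λ₁(1−λ₂))] − 1. -/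
open Finset

/-- reduction of `ℙ_D^{(2)}` when `A = ε`. -/
theorem statement_17 (F : Type) [Field F] [Fintype F] (hq : Odd (Fintype.card F))
    (B₁ B₂ C : MulChar F ℂ) (l₁ l₂ : F)
    (h0 : l₁ ≠ 0) (h1 : l₁ ≠ 1) (h2 : l₂ ≠ 1) :
    P2 1 B₁ B₂ C l₁ l₂ =
      (C * B₁⁻¹) (1 - l₁) * C⁻¹ (-l₁) * B₂⁻¹ (1 - l₂) *
          P1 C B₂ (C * B₁⁻¹) (l₂ * (1 - l₁) / (l₁ * (1 - l₂))) - 1 := by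
  classical
  have hl1 : (1:F) - l₁ ≠ 0 := sub_ne_zero.mpr (Ne.symm h1)
  have hl2 : (1:F) - l₂ ≠ 0 := sub_ne_zero.mpr (Ne.symm h2)
  set a : F := (1 - l₁) / l₁ with ha_def
  have ha : a ≠ 0 := div_ne_zero hl1 h0
  set μ : F := l₂ * (1 - l₁) / (l₁ * (1 - l₂)) with hμ_def
  set g : F → ℂ := fun y => C (1 - y) * B₁⁻¹ (1 - l₁ * y) * B₂⁻¹ (1 - l₂ * y) with hg
  -- Step 1: P2 = ∑ g - 1
  have step1 : P2 1 B₁ B₂ C l₁ l₂ = (∑ y : F, g y) - 1 := by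
    have : ∀ y : F, (1 : MulChar F ℂ) y * (C * (1 : MulChar F ℂ)⁻¹) (1 - y) *
        B₁⁻¹ (1 - l₁ * y) * B₂⁻¹ (1 - l₂ * y) = g y - (if y = 0 then 1 else 0) := by
      intro y
      by_cases hy : y = 0
      · subst hy
        simp [hg, MulChar.map_one]
        exact MulChar.map_nonunit 1 (by simp)
      · rw [MulChar.one_apply (isUnit_iff_ne_zero.mpr hy), if_neg hy, inv_one, mul_one, hg]
        ring
    rw [P2]
    simp only [this]
    rw [Finset.sum_sub_distrib, Finset.sum_ite_eq' Finset.univ (0:F) (fun _ => (1:ℂ))]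
    simp
  rw [step1]
  congr 1
  -- Step 2: reindex
  rw [P1, Finset.mul_sum]
  have hbij : Function.Bijective (fun x : F => 1 + a * x) :=
    ((Equiv.mulLeft₀ a ha).trans (Equiv.addLeft 1)).bijective
  refine (Fintype.sum_bijective _ hbij _ _ fun x => ?_).symm
  show (C * B₁⁻¹) (1 - l₁) * C⁻¹ (-l₁) * B₂⁻¹ (1 - l₂) *
      (C x * ((C * B₁⁻¹) * C⁻¹) (1 - x) * B₂⁻¹ (1 - μ * x)) =
      C (1 - (1 + a * x)) * B₁⁻¹ (1 - l₁ * (1 + a * x)) * B₂⁻¹ (1 - l₂ * (1 + a * x))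
  have hch : (C * B₁⁻¹) * C⁻¹ = B₁⁻¹ := by
    rw [mul_comm C B₁⁻¹, mul_inv_cancel_right]
  have harg1 : (1:F) - (1 + a * x) = ((1 - l₁) * (-l₁)⁻¹) * x := by
    rw [inv_neg, ha_def]
    field_simp
    ring
  have hla : l₁ * a = 1 - l₁ := by rw [ha_def]; field_simp
  have harg2 : (1:F) - l₁ * (1 + a * x) = (1 - l₁) * (1 - x) := by
    linear_combination (-x) * hla
  have hmu : (1 - l₂) * μ = l₂ * a := by
    rw [hμ_def, ha_def]; field_simp
  have harg3 : (1:F) - l₂ * (1 + a * x) = (1 - l₂) * (1 - μ * x) := by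
    linear_combination x * hmu
  rw [hch, harg1, harg2, harg3, map_mul, map_mul, map_mul, map_mul,
    MulChar.mul_apply, MulChar.inv_apply' C (-l₁)]
  ring
end
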